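/- Let C be a finite connected configuration in Z^2 with no articulation cells and at least two cells, and suppose C has no leaves. Then the East-most cell v of the North-most row of C has both its South neighbor and its West-adjacent neighbor (x-1,y) in C, and there exist a path in C from the West-most cell of the North-most row to (x,y-1) avoiding v, and a path in C from that cell to (x-1,y) avoiding v. -/
import Mathlib


/-- Two grid cells are adjacent if their L1 (Manhattan) distance is 1. -/
def gridAdj (p q : ℤ × ℤ) : Prop :=
  |p.1 - q.1| + |p.2 - q.2| = 1

/-- Reachability within a set `S` of cells, along grid adjacency. -/
inductive ReachIn (S : Set (ℤ × ℤ)) : ℤ × ℤ → ℤ × ℤ → Prop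
  | refl {p : ℤ × ℤ} (hp : p ∈ S) : ReachIn S p p
  | tail {p q r : ℤ × ℤ} (h : ReachIn S p q) (hadj : gridAdj q r) (hr : r ∈ S) :
      ReachIn S p r

/-- A set of cells is connected (as induced subgraph of the grid). -/
def ConnectedConf (C : Set (ℤ × ℤ)) : Prop :=
  C.Nonempty ∧ ∀ p ∈ C, ∀ q ∈ C, ReachIn C p q

/-- A configuration is contractible if the subgraph of the grid induced by its
complement is connected. -/
def Contractible (C : Set (ℤ × ℤ)) : Prop :=
  ∀ p ∈ Cᶜ, ∀ q ∈ Cᶜ, ReachIn Cᶜ p q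

/-- A leaf: a cell of `C` with exactly one neighbor in `C`. -/
def IsLeaf (C : Set (ℤ × ℤ)) (v : ℤ × ℤ) : Prop :=
  v ∈ C ∧ ∃! w, w ∈ C ∧ gridAdj v w

/-- A NE-corner: a cell of `C` whose neighbors in `C` are exactly the cells
South and West of it. -/
def IsNECorner (C : Set (ℤ × ℤ)) (v : ℤ × ℤ) : Prop :=
  v ∈ C ∧ (v.1 - 1, v.2) ∈ C ∧ (v.1, v.2 - 1) ∈ C ∧
    (v.1 + 1, v.2) ∉ C ∧ (v.1, v.2 + 1) ∉ C

/-- A NW-corner: a cell of `C` whose neighbors in `C` are exactly the cells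
South and East of it. -/
def IsNWCorner (C : Set (ℤ × ℤ)) (v : ℤ × ℤ) : Prop :=
  v ∈ C ∧ (v.1 + 1, v.2) ∈ C ∧ (v.1, v.2 - 1) ∈ C ∧
    (v.1 - 1, v.2) ∉ C ∧ (v.1, v.2 + 1) ∉ C

/-- A hole of `C`: a finite connected component of the complement of `C`. -/
def IsHole (C H : Set (ℤ × ℤ)) : Prop :=
  H.Finite ∧ ∃ p ∈ Cᶜ, H = {q | ReachIn Cᶜ p q}

/-- One elimination step: remove a leaf, or a NE-corner belonging to a 4-cycle,
or a NW-corner belonging to a 4-cycle. -/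
def ElimStep (C D : Set (ℤ × ℤ)) : Prop :=
  ∃ v, D = C \ {v} ∧
    (IsLeaf C v ∨ (IsNECorner C v ∧ (v.1 - 1, v.2 - 1) ∈ C) ∨
      (IsNWCorner C v ∧ (v.1 + 1, v.2 - 1) ∈ C))

lemma reachIn_mem {S : Set (ℤ × ℤ)} {p q : ℤ × ℤ} (h : ReachIn S p q) :
    p ∈ S ∧ q ∈ S := by
  induction h with
  | refl hp => exact ⟨hp, hp⟩
  | tail h hadj hr ih => exact ⟨ih.1, hr⟩

lemma gridAdj_symm {p q : ℤ × ℤ} (h : gridAdj p q) : gridAdj q p := by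
  unfold gridAdj at *
  rw [abs_sub_comm q.1, abs_sub_comm q.2]; exact h

lemma gridAdj_cases {v w : ℤ × ℤ} (h : gridAdj v w) :
    w = (v.1 + 1, v.2) ∨ w = (v.1 - 1, v.2) ∨ w = (v.1, v.2 + 1) ∨
      w = (v.1, v.2 - 1) := by
  unfold gridAdj at h
  rcases abs_cases (v.1 - w.1) with ⟨h1, _⟩ | ⟨h1, _⟩ <;>
    rcases abs_cases (v.2 - w.2) with ⟨h2, _⟩ | ⟨h2, _⟩ <;>
    [skip; skip; skip; skip] <;>
    · rcases w with ⟨a, b⟩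
      simp only [Prod.mk.injEq] at *
      omega

lemma reach_last {S : Set (ℤ × ℤ)} {q v : ℤ × ℤ} (h : ReachIn S q v) :
    q = v ∨ ∃ p ∈ S, gridAdj v p := by
  cases h with
  | refl _ => exact Or.inl rfl
  | tail h hadj hr => exact Or.inr ⟨_, (reachIn_mem h).2, gridAdj_symm hadj⟩

/-- In a finite connected configuration with no articulation cells, at least
two cells, and no leaves, the East-most cell `v` of the North-most row has its
South and West neighbors in `C`, and from the West-most cell `u` of the
North-most row there are paths in `C` avoiding `v` to both of them. -/
theorem paths_avoiding_corner (C : Set (ℤ × ℤ)) (hfin : C.Finite)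
    (hconn : ConnectedConf C) (h2 : 2 ≤ C.ncard)
    (hartic : ∀ w ∈ C, ConnectedConf (C \ {w}))
    (hleaf : ∀ z, ¬ IsLeaf C z)
    (v u : ℤ × ℤ) (hv : v ∈ C)
    (hrow : ∀ p ∈ C, p.2 ≤ v.2)
    (hcol : ∀ p ∈ C, p.2 = v.2 → p.1 ≤ v.1)
    (hu : u ∈ C) (hurow : u.2 = v.2)
    (humin : ∀ p ∈ C, p.2 = v.2 → u.1 ≤ p.1) :
    (v.1, v.2 - 1) ∈ C ∧ (v.1 - 1, v.2) ∈ C ∧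
      ReachIn (C \ {v}) u (v.1, v.2 - 1) ∧
      ReachIn (C \ {v}) u (v.1 - 1, v.2) := by
    -- v has only W and S as possible neighbors
  have hWS : ∀ w ∈ C, gridAdj v w → w = (v.1 - 1, v.2) ∨ w = (v.1, v.2 - 1) := by
    intro w hw hadj
    rcases gridAdj_cases hadj with h | h | h | h
    · exact absurd (hcol w hw (by rw [h])) (by rw [h]; simp)
    · exact Or.inl h
    · exact absurd (hrow w hw) (by rw [h]; simp)
    · exact Or.inr h
  -- v has some neighbor in C
  have hnb : ∃ w ∈ C, gridAdj v w := by
    obtain ⟨q, hq, hqv⟩ := Set.exists_ne_of_one_lt_ncard (show 1 < C.ncard by omega) v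
    rcases reach_last (hconn.2 q hq v hv) with h | ⟨p, hp, hadj⟩
    · exact absurd h hqv
    · exact ⟨p, hp, hadj⟩
  have hgW : gridAdj v (v.1 - 1, v.2) := by unfold gridAdj; simp
  have hgS : gridAdj v (v.1, v.2 - 1) := by unfold gridAdj; simp
  -- both W and S are in C, else v is a leaf
  have hS : (v.1, v.2 - 1) ∈ C := by
    by_contra hS
    obtain ⟨w, hw, hadj⟩ := hnb
    have hwW : w = (v.1 - 1, v.2) := by
      rcases hWS w hw hadj with h | h
      · exact h
      · exact absurd (h ▸ hw) hS
    exact hleaf v ⟨hv, (v.1 - 1, v.2), ⟨hwW ▸ hw, hgW⟩, by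
      intro y ⟨hy, hya⟩
      rcases hWS y hy hya with h | h
      · exact h
      · exact absurd (h ▸ hy) hS⟩
  have hW : (v.1 - 1, v.2) ∈ C := by
    by_contra hW
    exact hleaf v ⟨hv, (v.1, v.2 - 1), ⟨hS, hgS⟩, by
      intro y ⟨hy, hya⟩
      rcases hWS y hy hya with h | h
      · exact absurd (h ▸ hy) hW
      · exact h⟩
  -- u ≠ v
  have huv : u ≠ v := by
    intro h
    have := humin (v.1 - 1, v.2) hW rfl
    rw [h] at this
    simp at this
  have hconn' := (hartic v hv).2
  refine ⟨hS, hW, ?_, ?_⟩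
  · exact hconn' u ⟨hu, huv⟩ (v.1, v.2 - 1)
      ⟨hS, by simp [Prod.ext_iff]⟩
  · exact hconn' u ⟨hu, huv⟩ (v.1 - 1, v.2)
      ⟨hW, by simp [Prod.ext_iff]⟩
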